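/- arXiv:2510.26514 — 3 statements merged into one kernel-verified Lean document; each statement's English description precedes it below -/
import Mathlib

section
/- Let Γ : [0,1] → ℝ² be a C² arc-length parametrized curve with curvature κ satisfying -1 < κ(s) < 0 for all s ∈ [0,1], and let K = sup_{s∈[0,1]} |κ(s)|. Let f_h(t) = h·sin²(πt) and define the perturbed curve F_h(s) = Γ(s) + f_h(s)N(s), where N is the unit normal. Then for all sufficiently small h > 0, the arc length ℓ(F_h) = ∫₀¹ ‖F_h'(s)‖ ds satisfies 1 + h² ≤ ℓ(F_h) ≤ 1 + 4h² + Kh. -/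
open Real

lemma int_sq1 : ∫ s in (0:ℝ)..1, sin (π * s) ^ 2 = 1/2 := by
  rw [intervalIntegral.integral_comp_mul_left (fun x => sin x ^ 2) pi_ne_zero]
  simp [integral_sin_sq]; field_simp

lemma int_sq2 : ∫ s in (0:ℝ)..1, sin (2 * π * s) ^ 2 = 1/2 := by
  rw [intervalIntegral.integral_comp_mul_left (fun x => sin x ^ 2) (by positivity : (2*π:ℝ) ≠ 0)]
  simp [integral_sin_sq, sin_two_pi, cos_two_pi]; field_simp


lemma int_L (d : ℝ) :
    ∫ s in (0:ℝ)..1, (1 + d * sin (2 * π * s) ^ 2) = 1 + d / 2 := by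
  have hc2 : IntervalIntegrable (fun s : ℝ => d * Real.sin (2 * π * s) ^ 2)
      MeasureTheory.volume 0 1 := by
    apply Continuous.intervalIntegrable; fun_prop
  rw [intervalIntegral.integral_add intervalIntegrable_const hc2,
    intervalIntegral.integral_const_mul, int_sq2]
  simp; ring

lemma int_U (c d : ℝ) :
    ∫ s in (0:ℝ)..1, (1 + c * sin (π * s) ^ 2 + d * sin (2 * π * s) ^ 2)
      = 1 + c / 2 + d / 2 := by
  have hc1 : IntervalIntegrable (fun s : ℝ => c * Real.sin (π * s) ^ 2)
      MeasureTheory.volume 0 1 := by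
    apply Continuous.intervalIntegrable; fun_prop
  have hc2 : IntervalIntegrable (fun s : ℝ => d * Real.sin (2 * π * s) ^ 2)
      MeasureTheory.volume 0 1 := by
    apply Continuous.intervalIntegrable; fun_prop
  rw [intervalIntegral.integral_add (intervalIntegrable_const.add hc1) hc2,
    intervalIntegral.integral_add intervalIntegrable_const hc1,
    intervalIntegral.integral_const_mul, intervalIntegral.integral_const_mul,
    int_sq1, int_sq2]
  simp; ring

/-- Length estimate for the normal perturbation of an arc-length parametrized curve
with negative curvature `-1 < κ < 0`: for all sufficiently small `h > 0`,
`1 + h² ≤ ℓ(F_h) ≤ 1 + 4h² + K h`, where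
`ℓ(F_h) = ∫₀¹ √((1 - κ(s) f_h(s))² + (f_h'(s))²) ds` with `f_h(t) = h sin²(π t)`. -/
theorem stmt_4
    (κ : ℝ → ℝ) (K : ℝ)
    (hκ : ∀ s ∈ Set.Icc (0:ℝ) 1, -1 < κ s ∧ κ s < 0)
    (hκcont : ContinuousOn κ (Set.Icc (0:ℝ) 1))
    (hK : K = ⨆ s : Set.Icc (0:ℝ) 1, |κ s|) :
    ∃ h₀ > 0, ∀ h : ℝ, 0 < h → h < h₀ →
      1 + h ^ 2 ≤
        (∫ s in (0:ℝ)..1,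
          Real.sqrt ((1 - κ s * (h * Real.sin (π * s) ^ 2)) ^ 2 +
            (π * h * Real.sin (2 * π * s)) ^ 2)) ∧
      (∫ s in (0:ℝ)..1,
          Real.sqrt ((1 - κ s * (h * Real.sin (π * s) ^ 2)) ^ 2 +
            (π * h * Real.sin (2 * π * s)) ^ 2)) ≤ 1 + 4 * h ^ 2 + K * h := by
  have hbdd : BddAbove (Set.range fun s : Set.Icc (0:ℝ) 1 => |κ s|) := by
    refine ⟨1, ?_⟩
    rintro x ⟨⟨s, hs⟩, rfl⟩
    obtain ⟨h1, h2⟩ := hκ s hs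
    simp only
    rw [abs_le]; constructor <;> linarith
  have hKle : ∀ s ∈ Set.Icc (0:ℝ) 1, |κ s| ≤ K := by
    intro s hs; rw [hK]; exact le_ciSup hbdd ⟨s, hs⟩
  have hK0 : 0 ≤ K := le_trans (abs_nonneg (κ 0)) (hKle 0 (by norm_num))
  have hπ4 : π < 4 := by linarith [pi_lt_d2]
  have hπ3 : 3 < π := by linarith [pi_gt_d6]
  have hπ0 : 0 < π := pi_pos
  have hπsq9 : 9 ≤ π ^ 2 := by nlinarith
  have hπsq16 : π ^ 2 ≤ 16 := by nlinarith
  refine ⟨1/4, by norm_num, fun h hh0 hh4 => ?_⟩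
  set I : ℝ → ℝ := fun s =>
    Real.sqrt ((1 - κ s * (h * Real.sin (π * s) ^ 2)) ^ 2 +
      (π * h * Real.sin (2 * π * s)) ^ 2) with hIdef
  have hIcont : ContinuousOn I (Set.uIcc (0:ℝ) 1) := by
    rw [Set.uIcc_of_le (by norm_num : (0:ℝ) ≤ 1)]
    apply ContinuousOn.sqrt
    apply ContinuousOn.add
    · apply ContinuousOn.pow
      apply ContinuousOn.sub continuousOn_const
      exact hκcont.mul (by fun_prop)
    · fun_prop
  have hIint : IntervalIntegrable I MeasureTheory.volume 0 1 :=
    hIcont.intervalIntegrable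
  have hbsq : ∀ s : ℝ, (π * h * Real.sin (2 * π * s)) ^ 2 ≤ 1 := by
    intro s
    have h1 : Real.sin (2 * π * s) ^ 2 ≤ 1 := sin_sq_le_one _
    have h2 : (0:ℝ) ≤ π * h := by positivity
    have h3 : π * h ≤ 1 := by nlinarith
    have h4 : (π * h) ^ 2 ≤ 1 := by nlinarith
    have h5 : (π * h * Real.sin (2 * π * s)) ^ 2
        = (π * h) ^ 2 * Real.sin (2 * π * s) ^ 2 := by ring
    rw [h5]
    calc (π * h) ^ 2 * Real.sin (2 * π * s) ^ 2
        ≤ 1 * 1 := by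
          apply mul_le_mul h4 h1 (sq_nonneg _) (by norm_num)
      _ = 1 := by norm_num
  have ha1 : ∀ s ∈ Set.Icc (0:ℝ) 1, 1 ≤ 1 - κ s * (h * Real.sin (π * s) ^ 2) := by
    intro s hs
    have hκs := (hκ s hs).2
    have hnn : (0:ℝ) ≤ h * Real.sin (π * s) ^ 2 := by positivity
    nlinarith
  constructor
  · -- lower bound
    set L : ℝ → ℝ := fun s => 1 + π ^ 2 * h ^ 2 / 3 * Real.sin (2 * π * s) ^ 2 with hLdef
    have hLc : Continuous L := by rw [hLdef]; fun_prop
    have hLint : IntervalIntegrable L MeasureTheory.volume 0 1 :=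
      hLc.intervalIntegrable 0 1
    have hLle : ∀ s ∈ Set.Icc (0:ℝ) 1, L s ≤ I s := by
      intro s hs
      set b := π * h * Real.sin (2 * π * s) with hb
      set a := 1 - κ s * (h * Real.sin (π * s) ^ 2) with hadef
      have ha : 1 ≤ a := ha1 s hs
      have hbsq' : b ^ 2 ≤ 1 := hbsq s
      have hb2 : 0 ≤ b ^ 2 := sq_nonneg b
      have hLval : L s = 1 + b ^ 2 / 3 := by
        simp only [hLdef, hb]; ring
      rw [hLval]
      have key : (1 + b ^ 2 / 3) ^ 2 ≤ a ^ 2 + b ^ 2 := by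
        nlinarith [mul_le_mul_of_nonneg_left hbsq' hb2]
      have h1 : Real.sqrt ((1 + b ^ 2 / 3) ^ 2) ≤ Real.sqrt (a ^ 2 + b ^ 2) :=
        Real.sqrt_le_sqrt key
      rwa [Real.sqrt_sq (by positivity)] at h1
    have hLval : ∫ s in (0:ℝ)..1, L s = 1 + π ^ 2 * h ^ 2 / 6 := by
      have h0 := int_L (π ^ 2 * h ^ 2 / 3)
      simp only [hLdef]
      rw [h0]; ring
    calc 1 + h ^ 2 ≤ 1 + π ^ 2 * h ^ 2 / 6 := by nlinarith [sq_nonneg h]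
      _ = ∫ s in (0:ℝ)..1, L s := hLval.symm
      _ ≤ ∫ s in (0:ℝ)..1, I s :=
        intervalIntegral.integral_mono_on (by norm_num) hLint hIint hLle
  · -- upper bound
    set U : ℝ → ℝ := fun s =>
      1 + K * h * Real.sin (π * s) ^ 2 + π ^ 2 * h ^ 2 / 2 * Real.sin (2 * π * s) ^ 2
      with hUdef
    have hUc : Continuous U := by rw [hUdef]; fun_prop
    have hUint : IntervalIntegrable U MeasureTheory.volume 0 1 :=
      hUc.intervalIntegrable 0 1
    have hUle : ∀ s ∈ Set.Icc (0:ℝ) 1, I s ≤ U s := by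
      intro s hs
      set b := π * h * Real.sin (2 * π * s) with hb
      set a := 1 - κ s * (h * Real.sin (π * s) ^ 2) with hadef
      have ha : 1 ≤ a := ha1 s hs
      have hb2 : 0 ≤ b ^ 2 := sq_nonneg b
      have key : a ^ 2 + b ^ 2 ≤ (a + b ^ 2 / 2) ^ 2 := by
        nlinarith [mul_le_mul_of_nonneg_right ha hb2, sq_nonneg (b ^ 2)]
      have h1 : Real.sqrt (a ^ 2 + b ^ 2) ≤ Real.sqrt ((a + b ^ 2 / 2) ^ 2) :=
        Real.sqrt_le_sqrt key
      rw [Real.sqrt_sq (by nlinarith)] at h1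
      refine le_trans h1 ?_
      have hκK : -κ s ≤ K := (neg_le_abs _).trans (hKle s hs)
      have hsin : (0:ℝ) ≤ h * Real.sin (π * s) ^ 2 := by positivity
      have h2 : a ≤ 1 + K * (h * Real.sin (π * s) ^ 2) := by
        have := mul_le_mul_of_nonneg_right hκK hsin
        simp only [hadef]; linarith
      have h3 : b ^ 2 / 2 = π ^ 2 * h ^ 2 / 2 * Real.sin (2 * π * s) ^ 2 := by
        simp only [hb]; ring
      have hUval : U s = 1 + K * h * Real.sin (π * s) ^ 2
          + π ^ 2 * h ^ 2 / 2 * Real.sin (2 * π * s) ^ 2 := by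
        simp only [hUdef]
      rw [hUval]
      have h4 : K * (h * Real.sin (π * s) ^ 2) = K * h * Real.sin (π * s) ^ 2 := by ring
      linarith [h2, h3.le, h4.le, h4.ge]
    have hUval : ∫ s in (0:ℝ)..1, U s = 1 + K * h / 2 + π ^ 2 * h ^ 2 / 4 := by
      have h0 := int_U (K * h) (π ^ 2 * h ^ 2 / 2)
      simp only [hUdef]
      rw [h0]; ring
    calc (∫ s in (0:ℝ)..1, I s) ≤ ∫ s in (0:ℝ)..1, U s :=
        intervalIntegral.integral_mono_on (by norm_num) hIint hUint hUle
      _ = 1 + K * h / 2 + π ^ 2 * h ^ 2 / 4 := hUval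
      _ ≤ 1 + 4 * h ^ 2 + K * h := by nlinarith [sq_nonneg h, mul_nonneg hK0 hh0.le]
end

section
/- Every asymptotically smooth bounded rectifiable Jordan curve Γ is uniformly approximable: for every ε > 0 there exists n ∈ ℕ such that every subarc ⌢ab of Γ admits a partition a = a₀, a₁, …, aₙ = b along ⌢ab with (1+ε)·Σᵢ |aᵢ - aᵢ₋₁| ≥ ℓ(⌢ab). -/
open Real Finset

/-- Every asymptotically smooth bounded rectifiable Jordan curve is uniformly
approximable.  The curve is given by an arc-length parametrization `γ : ℝ → ℂ` of
total length `Lt`, so that the length of the subarc from `γ s` to `γ t` (for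
`0 ≤ t - s ≤ Lt`) is `t - s`, chords satisfy `dist (γ s) (γ t) ≤ t - s`, and
asymptotic smoothness says arcs with small chords have length at most `(1+ε)`
times the chord.  The conclusion produces, for every `ε > 0`, an `n` such that
every subarc admits a partition into `n` pieces of equal arc length whose chord
sum approximates the arc length up to factor `1 + ε`. -/
theorem stmt_7
    (γ : ℝ → ℂ) (Lt : ℝ) (hLt : 0 < Lt)
    (hchord : ∀ s t : ℝ, s ≤ t → t - s ≤ Lt → dist (γ s) (γ t) ≤ t - s)
    (hsmooth : ∀ ε > (0:ℝ), ∃ δ > (0:ℝ), ∀ s t : ℝ, s ≤ t → t - s ≤ Lt →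
      dist (γ s) (γ t) < δ → t - s ≤ (1 + ε) * dist (γ s) (γ t)) :
    ∀ ε > (0:ℝ), ∃ n : ℕ, 0 < n ∧ ∀ s t : ℝ, s ≤ t → t - s ≤ Lt →
      (1 + ε) * ∑ i ∈ Finset.range n,
          dist (γ (s + (i + 1) * (t - s) / n)) (γ (s + i * (t - s) / n))
        ≥ t - s := by
  intro ε hε
  obtain ⟨δ, hδ, hS⟩ := hsmooth ε hε
  obtain ⟨n0, hn0⟩ := exists_nat_gt (Lt / δ)
  refine ⟨n0 + 1, Nat.succ_pos _, ?_⟩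
  intro s t hst hLts
  set n : ℕ := n0 + 1 with hn
  have hm : (0:ℝ) < (n:ℝ) := by positivity
  have hm1 : (1:ℝ) ≤ (n:ℝ) := by exact_mod_cast Nat.one_le_iff_ne_zero.2 (by simp [hn])
  have hstn : 0 ≤ t - s := sub_nonneg.2 hst
  have hLtδ : Lt / (n:ℝ) < δ := by
    rw [div_lt_iff₀ hm]
    have h1 : Lt < n0 * δ := by
      have := (div_lt_iff₀ hδ).1 hn0
      linarith
    have h2 : (n0:ℝ) ≤ n := by exact_mod_cast Nat.le_succ n0
    nlinarith
  have key : ∀ i ∈ Finset.range n,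
      (t - s) / (n:ℝ) ≤ (1 + ε) *
        dist (γ (s + (i + 1) * (t - s) / n)) (γ (s + i * (t - s) / n)) := by
    intro i _
    set u : ℝ := s + i * (t - s) / n with hu
    set v : ℝ := s + (i + 1) * (t - s) / n with hv
    have hvu : v - u = (t - s) / n := by rw [hu, hv]; field_simp; ring
    have huv : u ≤ v := sub_nonneg.1 (hvu ▸ div_nonneg hstn hm.le)
    have h1 : v - u ≤ Lt := by
      rw [hvu]
      calc (t - s) / n ≤ t - s := div_le_self hstn hm1
        _ ≤ Lt := hLts
    have hd : dist (γ u) (γ v) ≤ v - u := hchord u v huv h1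
    have hlt : dist (γ u) (γ v) < δ := by
      have : (t - s) / n ≤ Lt / n := by gcongr
      rw [hvu] at hd
      linarith
    have := hS u v huv h1 hlt
    rw [hvu] at this
    rw [dist_comm]
    exact this
  have hsumle := Finset.sum_le_sum key
  have hsum : ∑ _i ∈ Finset.range n, (t - s) / (n:ℝ) = t - s := by
    rw [Finset.sum_const, Finset.card_range, nsmul_eq_mul]
    field_simp
  rw [hsum, ← Finset.mul_sum] at hsumle
  exact hsumle
end

section
/- Let Γ be a chord-arc Jordan curve that is asymptotically conformal and uniformly approximable. Then Γ is asymptotically smooth. -/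
open Real Finset

lemma stmt_8_pow_aux (ε : ℝ) (hε : 0 ≤ ε) (hε1 : ε ≤ 1) (n : ℕ) :
    (1 + ε) ^ n ≤ 1 + 3 ^ n * ε := by
  induction n with
  | zero => simpa using hε
  | succ n ih =>
    have h2 : (0:ℝ) ≤ 3 ^ n := by positivity
    calc (1+ε)^(n+1) = (1+ε)^n * (1+ε) := pow_succ _ _
      _ ≤ (1 + 3^n*ε) * (1+ε) := by
          apply mul_le_mul_of_nonneg_right ih (by linarith)
      _ ≤ 1 + 3^(n+1)*ε := by
          have h3 : (1:ℝ) ≤ 3^n := one_le_pow₀ (by norm_num)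
          have hεε : ε * ε ≤ ε := by nlinarith
          have e1 : ε ≤ 3^n * ε := by nlinarith
          have e2 : 3^n * (ε * ε) ≤ 3^n * ε := mul_le_mul_of_nonneg_left hεε h2
          have : (3:ℝ)^(n+1) = 3 * 3^n := by ring
          nlinarith

/-- A chord-arc Jordan curve that is asymptotically conformal and uniformly
approximable is asymptotically smooth.  The curve is a set `Γ ⊆ ℂ` with, for
`a b ∈ Γ`, the subarc `arc a b` of smaller diameter and its length `len a b`. -/
theorem stmt_8
    (Γ : Set ℂ) (arc : ℂ → ℂ → Set ℂ) (len : ℂ → ℂ → ℝ)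
    (harcmem : ∀ a ∈ Γ, ∀ b ∈ Γ, arc a b ⊆ Γ)
    (hchord : ∀ a ∈ Γ, ∀ b ∈ Γ, dist a b ≤ len a b)
    (hmono : ∀ a ∈ Γ, ∀ b ∈ Γ, ∀ x ∈ arc a b, ∀ y ∈ arc a b, len x y ≤ len a b)
    -- chord-arc condition
    (C : ℝ) (hC : 1 ≤ C)
    (hca : ∀ a ∈ Γ, ∀ b ∈ Γ, len a b ≤ C * dist a b)
    -- asymptotic conformality
    (hconf : ∀ ε > (0:ℝ), ∃ δ > (0:ℝ), ∀ x ∈ Γ, ∀ y ∈ Γ, dist x y < δ →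
      ∀ w ∈ arc x y, dist x w + dist w y ≤ (1 + ε) * dist x y)
    -- uniform approximability, with partition points lying in order along the arc
    (hua : ∀ ε₁ > (0:ℝ), ∃ L : ℕ, 0 < L ∧ ∀ a ∈ Γ, ∀ b ∈ Γ,
      ∃ p : ℕ → ℂ, p 0 = a ∧ p L = b ∧ (∀ i ≤ L, p i ∈ Γ) ∧
        (∀ i j k : ℕ, i ≤ j → j ≤ k → k ≤ L → p j ∈ arc (p i) (p k)) ∧
        len a b ≤ (1 + ε₁) * ∑ i ∈ Finset.range L, dist (p (i + 1)) (p i)) :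
    -- asymptotic smoothness
    ∀ ε₀ > (0:ℝ), ∃ δ > (0:ℝ), ∀ a ∈ Γ, ∀ b ∈ Γ, dist a b < δ →
      len a b ≤ (1 + ε₀) * dist a b := by
  intro ε₀ hε₀
  have hε₁ : (0:ℝ) < ε₀ / 2 := by positivity
  obtain ⟨L, hLpos, hpart⟩ := hua (ε₀ / 2) hε₁
  set c : ℝ := (ε₀/2) / (1 + ε₀/2) with hcdef
  have hc : 0 < c := by positivity
  set ε : ℝ := min 1 (c / 3 ^ L) with hεdef
  have hεpos : 0 < ε := lt_min one_pos (by positivity)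
  have hε1 : ε ≤ 1 := min_le_left _ _
  obtain ⟨δ, hδ, hconf'⟩ := hconf ε hεpos
  have hC0 : (0:ℝ) < C := lt_of_lt_of_le one_pos hC
  refine ⟨δ / C, by positivity, ?_⟩
  intro a ha b hb hab
  obtain ⟨p, hp0, hpL, hpΓ, hparc, hlen⟩ := hpart a ha b hb
  have harc : ∀ i ≤ L, p i ∈ arc a b := by
    intro i hi
    have := hparc 0 i L (Nat.zero_le _) hi le_rfl
    rwa [hp0, hpL] at this
  have hd : ∀ i ≤ L, ∀ j ≤ L, dist (p i) (p j) < δ := by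
    intro i hi j hj
    calc dist (p i) (p j) ≤ len (p i) (p j) := hchord _ (hpΓ i hi) _ (hpΓ j hj)
      _ ≤ len a b := hmono a ha b hb _ (harc i hi) _ (harc j hj)
      _ ≤ C * dist a b := hca a ha b hb
      _ < C * (δ / C) := mul_lt_mul_of_pos_left hab hC0
      _ = δ := by field_simp
  have key : ∀ k, 1 ≤ k → k ≤ L →
      ∑ i ∈ Finset.range k, dist (p (i+1)) (p i) ≤ (1+ε)^(k-1) * dist (p 0) (p k) := by
    intro k hk1 hkL
    induction k with
    | zero => omega
    | succ k ih =>
      rcases Nat.eq_zero_or_pos k with h0 | hpos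
      · subst h0
        simp [dist_comm]
      · have hkL' : k ≤ L := Nat.le_of_succ_le hkL
        have ihk := ih hpos hkL'
        rw [Finset.sum_range_succ]
        have hw : p k ∈ arc (p 0) (p (k+1)) :=
          hparc 0 k (k+1) (Nat.zero_le _) (Nat.le_succ _) hkL
        have hcf := hconf' (p 0) (hpΓ 0 (Nat.zero_le _)) (p (k+1)) (hpΓ _ hkL)
          (hd 0 (Nat.zero_le _) (k+1) hkL) (p k) hw
        have hpow : (1:ℝ) ≤ (1+ε)^(k-1) := one_le_pow₀ (by linarith)
        have hsucc : (1+ε)^(k-1) * (1+ε) = (1+ε)^(k+1-1) := by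
          rw [← pow_succ]
          congr 1
          omega
        calc ∑ i ∈ Finset.range k, dist (p (i+1)) (p i) + dist (p (k+1)) (p k)
            ≤ (1+ε)^(k-1) * dist (p 0) (p k) + dist (p (k+1)) (p k) := by linarith
          _ ≤ (1+ε)^(k-1) * (dist (p 0) (p k) + dist (p k) (p (k+1))) := by
              rw [dist_comm (p (k+1))]
              nlinarith [dist_nonneg (α := ℂ) (x := p k) (y := p (k+1))]
          _ ≤ (1+ε)^(k-1) * ((1+ε) * dist (p 0) (p (k+1))) := by
              apply mul_le_mul_of_nonneg_left hcf (by positivity)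
          _ = (1+ε)^(k+1-1) * dist (p 0) (p (k+1)) := by rw [← hsucc]; ring
  have hsum := key L hLpos le_rfl
  rw [hp0, hpL] at hsum
  have hpow1 : (1+ε)^(L-1) ≤ (1+ε)^L :=
    pow_le_pow_right₀ (by linarith) (Nat.sub_le _ _)
  have hpow2 : (1+ε)^L ≤ 1 + c := by
    calc (1+ε)^L ≤ 1 + 3^L * ε := stmt_8_pow_aux ε hεpos.le hε1 L
      _ ≤ 1 + 3^L * (c / 3^L) := by
          have : ε ≤ c / 3^L := min_le_right _ _
          nlinarith [pow_pos (show (0:ℝ) < 3 by norm_num) L]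
      _ = 1 + c := by
          have : (3:ℝ)^L ≠ 0 := by positivity
          field_simp
  have hdab : (0:ℝ) ≤ dist a b := dist_nonneg
  have hfinal : (1 + ε₀/2) * (1 + c) = 1 + ε₀ := by
    rw [hcdef]
    field_simp
    ring
  have hsum' : ∑ i ∈ Finset.range L, dist (p (i+1)) (p i) ≤ (1 + c) * dist a b := by
    calc ∑ i ∈ Finset.range L, dist (p (i+1)) (p i) ≤ (1+ε)^(L-1) * dist a b := hsum
      _ ≤ (1 + c) * dist a b := by
          apply mul_le_mul_of_nonneg_right _ hdab
          linarith
  calc len a b ≤ (1 + ε₀/2) * ∑ i ∈ Finset.range L, dist (p (i+1)) (p i) := hlen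
    _ ≤ (1 + ε₀/2) * ((1 + c) * dist a b) := by
        apply mul_le_mul_of_nonneg_left hsum' (by linarith)
    _ = (1 + ε₀) * dist a b := by rw [← mul_assoc, hfinal]
end
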